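/- Grade A by assigning weight j to the variable x_{i,j} (so the weight of a monomial is the sum of j times the exponent of x_{i,j}). Let I ⊆ A be a nonzero ∂-stable ideal which is homogeneous with respect to this grading and which contains no nonzero polynomial in the weight-zero variables x_{1,0}, …, x_{n,0} alone. Then for the quotient B = A/I with induced derivation ∂̄ one has ker ι ≠ W; that is, there exists a Kähler differential ω ∈ Ω_{B/k} with ι(ω) = 0 which is not a B-linear combination of elements (∂̄c)·dc′ − (∂̄c′)·dc. (This is the implication of the theorem asserting that if the degree −1 Koszul homology vanishes then the graded differential algebra is the full arc algebra of its degree-zero part.) -/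

import Mathlib

set_option synthInstance.maxHeartbeats 1000000
set_option maxHeartbeats 1000000

open scoped BigOperators

/-- The canonical derivation `∂` of the arc-space polynomial ring
`A = k[x_{i,j} : 1 ≤ i ≤ n, j ∈ ℕ]`, determined by `∂x_{i,j} = x_{i,j+1}`. -/
noncomputable def arcDerivation (k : Type*) [CommRing k] (n : ℕ) :
    Derivation k (MvPolynomial (Fin n × ℕ) k) (MvPolynomial (Fin n × ℕ) k) :=
  MvPolynomial.mkDerivation k (fun p : Fin n × ℕ => MvPolynomial.X (p.1, p.2 + 1))

/-!
Let `f ∈ I` be a nonzero homogeneous element of minimal weight `m`, so that `I ⊆ A_{≥ m}`, and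
`m ≥ 1` since `I` meets `k[x_{•,0}]` trivially. The form `ω = ∑ j (∂f/∂x_{i,j}) dx_{i,j-1}`
contracts to the Euler derivative `m f`, which vanishes in `B`, so `ω ∈ ker ι`.
Now `∂` modulo `A_{≥ m+1}` is a derivation of `B` into the `B`-module of `I`-torsion classes
(it takes values in `A_{≥ 1}`, and `I · A_{≥ 1} ⊆ A_{≥ m+1}`). Its contraction `ψ` sends
`(∂̄c) dc' - (∂̄c') dc` to `∂c ∂c' - ∂c' ∂c = 0`, so `ψ` kills `W`, while `ψ ω = m f ≠ 0` modulo
`A_{≥ m+1}` in characteristic zero. Hence `ω ∉ W`.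
-/

open MvPolynomial Finsupp

namespace Derivation

variable {R A M : Type*} [CommRing R] [CommRing A] [Algebra R A]

def codRestrict [AddCommMonoid M] [Module A M] [Module R M] [IsScalarTower R A M]
    (d : Derivation R A M) (p : Submodule A M) (h : ∀ a, d a ∈ p) : Derivation R A p where
  toFun a := ⟨d a, h a⟩
  map_add' a b := Subtype.ext (d.map_add a b)
  map_smul' r a := Subtype.ext (d.map_smul r a)
  map_one_eq_zero' := Subtype.ext d.map_one_eq_zero
  leibniz' a b := Subtype.ext (d.leibniz a b)

variable (I : Ideal A) [AddCommGroup M] [Module A M] [Module (A ⧸ I) M] [Module R M]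
  [IsScalarTower A (A ⧸ I) M]

def liftQuotient (d : Derivation R A M) (hd : ∀ a ∈ I, d a = 0) : Derivation R (A ⧸ I) M :=
  Derivation.mk'
    ((I.restrictScalars R).liftQ d.toLinearMap hd ∘ₗ
      (Submodule.Quotient.restrictScalarsEquiv R I).symm.toLinearMap)
    (by
      rintro ⟨a⟩ ⟨b⟩
      exact (d.leibniz a b).trans
        (by rw [← algebraMap_smul (A ⧸ I) a, ← algebraMap_smul (A ⧸ I) b]; rfl))

end Derivation

theorem Derivation.span_le_ker_liftKaehlerDifferential {R B N : Type*} [CommRing R] [CommRing B]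
    [Algebra R B] [AddCommGroup N] [Module B N] [Module R N] [IsScalarTower R B N]
    (D : Derivation R B B) (D' : Derivation R B N) (hD : ∀ c c', D c • D' c' = D c' • D' c) :
    Submodule.span B {ω | ∃ c c' : B,
        ω = D c • KaehlerDifferential.D R B c' - D c' • KaehlerDifferential.D R B c}
      ≤ LinearMap.ker D'.liftKaehlerDifferential := by
  rw [Submodule.span_le]
  rintro _ ⟨c, c', rfl⟩
  simp [hD c c']

namespace MvPolynomial

section Filtration

variable {σ R : Type*} [CommSemiring R] (w : σ → ℕ)

theorem le_weight_of_mem_support_mul {a b : MvPolynomial σ R} {s t : ℕ}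
    (ha : ∀ d ∈ a.support, s ≤ weight w d) (hb : ∀ d ∈ b.support, t ≤ weight w d) :
    ∀ d ∈ (a * b).support, s + t ≤ weight w d := by
  classical
  intro d hd
  obtain ⟨d₁, h₁, d₂, h₂, rfl⟩ := Finset.mem_add.mp (support_mul a b hd)
  rw [map_add]
  exact add_le_add (ha d₁ h₁) (hb d₂ h₂)

/-- `A_{≥ t}`, spanned by the monomials of weight at least `t`. -/
def weightedFiltration (t : ℕ) : Ideal (MvPolynomial σ R) where
  carrier := {a | ∀ d ∈ a.support, t ≤ weight w d}
  add_mem' {a b} ha hb d hd := by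
    classical
    exact (Finset.mem_union.mp (support_add hd)).elim (ha d) (hb d)
  zero_mem' := by simp
  smul_mem' c a ha := by
    simpa using le_weight_of_mem_support_mul w (s := 0) (by simp) ha

variable {w}

theorem weightedFiltration_antitone : Antitone (weightedFiltration (R := R) w) :=
  fun _ _ hst _ ha d hd => hst.trans (ha d hd)

theorem mul_mem_weightedFiltration {s t : ℕ} {a b : MvPolynomial σ R}
    (ha : a ∈ weightedFiltration w s) (hb : b ∈ weightedFiltration w t) :
    a * b ∈ weightedFiltration w (s + t) :=
  le_weight_of_mem_support_mul w ha hb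

theorem IsWeightedHomogeneous.mem_weightedFiltration {p : MvPolynomial σ R} {t u : ℕ}
    (hp : IsWeightedHomogeneous w p u) (htu : t ≤ u) : p ∈ weightedFiltration w t :=
  fun _ hd => (hp (mem_support_iff.mp hd)).symm ▸ htu

theorem IsWeightedHomogeneous.eq_zero_of_mem_weightedFiltration {p : MvPolynomial σ R} {u : ℕ}
    (hp : IsWeightedHomogeneous w p u) (hmem : p ∈ weightedFiltration w (u + 1)) : p = 0 := by
  by_contra hne
  obtain ⟨d, hd⟩ := support_nonempty.mpr hne
  have := hmem d hd
  rw [hp (mem_support_iff.mp hd)] at this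
  omega

theorem IsWeightedHomogeneous.mem_supported {p : MvPolynomial σ R}
    (hp : IsWeightedHomogeneous w p 0) : p ∈ supported R {i | w i = 0} := by
  rw [MvPolynomial.mem_supported]
  intro i hi
  obtain ⟨d, hd, hid⟩ := (mem_vars_iff_mem_support i).mp (Finset.mem_coe.mp hi)
  have := le_weight_of_ne_zero' w (Finsupp.mem_support_iff.mp hid)
  rw [hp (mem_support_iff.mp hd)] at this
  exact Nat.le_zero.mp this

theorem exists_isWeightedHomogeneous_of_mem_support {I : Ideal (MvPolynomial σ R)}
    (hI : ∀ f ∈ I, ∀ m, weightedHomogeneousComponent w m f ∈ I)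
    {g : MvPolynomial σ R} (hg : g ∈ I) {d : σ →₀ ℕ} (hd : d ∈ g.support) :
    ∃ f ∈ I, f ≠ 0 ∧ IsWeightedHomogeneous w f (weight w d) := by
  classical
  refine ⟨_, hI g hg _, fun h => ?_, weightedHomogeneousComponent_isWeightedHomogeneous _ _⟩
  have := congrArg (coeff d) h
  rw [coeff_weightedHomogeneousComponent, if_pos rfl, coeff_zero] at this
  exact mem_support_iff.mp hd this

theorem exists_isWeightedHomogeneous_le_weightedFiltration {I : Ideal (MvPolynomial σ R)}
    (hne : I ≠ ⊥) (hI : ∀ f ∈ I, ∀ m, weightedHomogeneousComponent w m f ∈ I) :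
    ∃ m, ∃ f ∈ I, f ≠ 0 ∧ IsWeightedHomogeneous w f m ∧ I ≤ weightedFiltration w m := by
  classical
  have hex : ∃ m, ∃ f ∈ I, f ≠ 0 ∧ IsWeightedHomogeneous w f m := by
    obtain ⟨g, hg, hg0⟩ := (Submodule.ne_bot_iff I).mp hne
    obtain ⟨d, hd⟩ := support_nonempty.mpr hg0
    exact ⟨_, exists_isWeightedHomogeneous_of_mem_support hI hg hd⟩
  obtain ⟨f, hf, hf0, hfm⟩ := Nat.find_spec hex
  exact ⟨_, f, hf, hf0, hfm, fun g hg d hd =>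
    Nat.find_min' hex (exists_isWeightedHomogeneous_of_mem_support hI hg hd)⟩

theorem IsWeightedHomogeneous.mem_adjoin_X_zero {k ι : Type*} [CommSemiring k]
    {p : MvPolynomial (ι × ℕ) k} (hp : IsWeightedHomogeneous Prod.snd p 0) :
    p ∈ Algebra.adjoin k (Set.range fun i : ι => (X (i, 0) : MvPolynomial (ι × ℕ) k)) := by
  have hrange : (Set.range fun i : ι => (X (i, 0) : MvPolynomial (ι × ℕ) k))
      = X '' {q | q.2 = 0} := by
    ext
    constructor
    · rintro ⟨i, rfl⟩
      exact ⟨(i, 0), rfl, rfl⟩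
    · rintro ⟨⟨i, j⟩, hj, rfl⟩
      exact ⟨i, by rw [show j = 0 from hj]⟩
  rw [hrange, ← supported_eq_adjoin_X]
  exact hp.mem_supported

end Filtration

section Euler

variable {σ R : Type*} [CommSemiring R]

noncomputable def weightedEulerDerivation (w : σ → ℕ) :
    Derivation R (MvPolynomial σ R) (MvPolynomial σ R) :=
  mkDerivation R fun i => w i • X i

variable {w : σ → ℕ}

theorem weightedEulerDerivation_X (i : σ) :
    weightedEulerDerivation w (X i : MvPolynomial σ R) = w i • X i :=
  mkDerivation_X R _ i

theorem weightedEulerDerivation_monomial (s : σ →₀ ℕ) (r : R) :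
    weightedEulerDerivation w (monomial s r) = weight w s • monomial s r := by
  classical
  have hterm : ∀ i ∈ s.support,
      monomial (s - single i 1) (s i : R) • (w i • X i) = (s i * w i) • monomial s (1 : R) := by
    intro i hi
    rw [smul_eq_mul, mul_smul_comm, X, monomial_mul, tsub_add_cancel_of_le
      (single_le_iff.mpr (Nat.one_le_iff_ne_zero.mpr (Finsupp.mem_support_iff.mp hi))),
      ← map_nsmul, ← map_nsmul, nsmul_eq_mul, nsmul_eq_mul]
    push_cast
    ring_nf
  rw [weightedEulerDerivation, mkDerivation_monomial, Finsupp.sum, Finset.sum_congr rfl hterm,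
    ← Finset.sum_smul, weight_apply, Finsupp.sum, smul_comm, ← map_smul, smul_eq_mul, mul_one]
  rfl

theorem IsWeightedHomogeneous.weightedEulerDerivation_eq {p : MvPolynomial σ R} {m : ℕ}
    (hp : IsWeightedHomogeneous w p m) : weightedEulerDerivation w p = m • p := by
  conv_lhs => rw [p.as_sum]
  rw [map_sum, Finset.sum_congr rfl fun d hd => by
    rw [weightedEulerDerivation_monomial, hp (mem_support_iff.mp hd)], ← Finset.smul_sum,
    ← p.as_sum]

end Euler

end MvPolynomial

section Arc

variable {k : Type*} [CommRing k] {n : ℕ}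

local notation "A" => MvPolynomial (Fin n × ℕ) k

theorem arcDerivation_X (q : Fin n × ℕ) : arcDerivation k n (X q) = X (q.1, q.2 + 1) :=
  mkDerivation_X k _ q

theorem arcDerivation_monomial_mem_weightedFiltration (s : (Fin n × ℕ) →₀ ℕ) (r : k) :
    arcDerivation k n (monomial s r) ∈ weightedFiltration Prod.snd (weight Prod.snd s + 1) := by
  rw [arcDerivation, mkDerivation_monomial]
  refine Submodule.smul_of_tower_mem _ _ (Submodule.sum_mem _ fun q hq => ?_)
  have hq' : s q ≠ 0 := Finsupp.mem_support_iff.mp hq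
  refine ((isWeightedHomogeneous_monomial Prod.snd (s - single q 1) (s q : k) rfl).mul
    (isWeightedHomogeneous_X k Prod.snd (q.1, q.2 + 1))).mem_weightedFiltration (le_of_eq ?_)
  rw [← weight_sub_single_add hq', add_assoc]

theorem arcDerivation_mem_weightedFiltration {a : A} {t : ℕ}
    (ha : a ∈ weightedFiltration Prod.snd t) :
    arcDerivation k n a ∈ weightedFiltration Prod.snd (t + 1) := by
  rw [a.as_sum, map_sum]
  exact Submodule.sum_mem _ fun d hd => weightedFiltration_antitone (by simpa using ha d hd)
    (arcDerivation_monomial_mem_weightedFiltration d _)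

variable (I : Ideal (MvPolynomial (Fin n × ℕ) k))

/-- `x_{i,j} ↦ j • d x_{i,j-1}`; at `j = 0` the truncated `j - 1` is harmless, the coefficient
being `0`. -/
noncomputable def shiftedDifferential : Derivation k A Ω[(A ⧸ I)⁄k] :=
  mkDerivation k fun q : Fin n × ℕ =>
    q.2 • KaehlerDifferential.D k (A ⧸ I) (Ideal.Quotient.mk I (X (q.1, q.2 - 1)))

theorem map_liftKaehlerDifferential_shiftedDifferential {N P : Type*}
    [AddCommGroup N] [Module (A ⧸ I) N] [Module k N] [IsScalarTower k (A ⧸ I) N] [Module A N]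
    [IsScalarTower A (A ⧸ I) N]
    [AddCommGroup P] [Module A P] [Module k P] [IsScalarTower k A P]
    (D : Derivation k (A ⧸ I) N) (φ : N →ₗ[A] P) (π : A →ₗ[A] P)
    (hD : ∀ q : Fin n × ℕ, φ (D (Ideal.Quotient.mk I (X q))) = π (X (q.1, q.2 + 1))) (a : A) :
    φ (D.liftKaehlerDifferential (shiftedDifferential I a))
      = π (weightedEulerDerivation Prod.snd a) := by
  have : (φ ∘ₗ D.liftKaehlerDifferential.restrictScalars A).compDer (shiftedDifferential I)
      = π.compDer (weightedEulerDerivation Prod.snd) := by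
    refine derivation_ext fun q => ?_
    rcases q with ⟨i, _ | j⟩
    · simp [shiftedDifferential, weightedEulerDerivation_X]
    · simp [shiftedDifferential, weightedEulerDerivation_X, hD, -nsmul_eq_mul]
  exact DFunLike.congr_fun this a

variable (m : ℕ)

local notation "J" => weightedFiltration (R := k) (Prod.snd : Fin n × ℕ → ℕ) (m + 1)

/-- `∂ a ∈ A_{≥ 1}`, which `I ⊆ A_{≥ m}` multiplies into `A_{≥ m+1}`. -/
theorem mk_arcDerivation_mem_torsionBySet (hI : I ≤ weightedFiltration Prod.snd m) (a : A) :
    Ideal.Quotient.mk J (arcDerivation k n a) ∈ Submodule.torsionBySet A (A ⧸ J) I := by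
  refine (Submodule.mem_torsionBySet_iff _ _).mpr fun ⟨g, hg⟩ => ?_
  rw [← Ideal.Quotient.mk_eq_mk, ← Submodule.Quotient.mk_smul, Submodule.Quotient.mk_eq_zero,
    smul_eq_mul]
  exact mul_mem_weightedFiltration (hI hg)
    (arcDerivation_mem_weightedFiltration (t := 0) fun _ _ => Nat.zero_le _)

noncomputable def truncatedArcDerivation (hI : I ≤ weightedFiltration Prod.snd m) :
    Derivation k (A ⧸ I) (Submodule.torsionBySet A (A ⧸ J) I) :=
  (((Algebra.linearMap A (A ⧸ J)).compDer (arcDerivation k n)).codRestrict _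
      (mk_arcDerivation_mem_torsionBySet I m hI)).liftQuotient I fun _ ha =>
    Subtype.ext (Ideal.Quotient.eq_zero_iff_mem.mpr (arcDerivation_mem_weightedFiltration (hI ha)))

theorem coe_truncatedArcDerivation_mk (hI : I ≤ weightedFiltration Prod.snd m) (a : A) :
    (truncatedArcDerivation I m hI (Ideal.Quotient.mk I a) : A ⧸ J)
      = Ideal.Quotient.mk J (arcDerivation k n a) := rfl

theorem smul_truncatedArcDerivation_comm (hI : I ≤ weightedFiltration Prod.snd m)
    {D : Derivation k (A ⧸ I) (A ⧸ I)}
    (hD : ∀ a, D (Ideal.Quotient.mk I a) = Ideal.Quotient.mk I (arcDerivation k n a))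
    (c c' : A ⧸ I) :
    D c • truncatedArcDerivation I m hI c' = D c' • truncatedArcDerivation I m hI c := by
  obtain ⟨a, rfl⟩ := Ideal.Quotient.mk_surjective c
  obtain ⟨a', rfl⟩ := Ideal.Quotient.mk_surjective c'
  apply Subtype.ext
  simp only [hD, Submodule.torsionBySet.mk_smul, Submodule.coe_smul,
    coe_truncatedArcDerivation_mk]
  rw [← Ideal.Quotient.mk_eq_mk, ← Ideal.Quotient.mk_eq_mk, ← Submodule.Quotient.mk_smul,
    ← Submodule.Quotient.mk_smul, smul_eq_mul, smul_eq_mul, mul_comm]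

end Arc

theorem arc_koszul_minus_one_nonvanishing_general (k : Type*) [Field k] [CharZero k]
    (n : ℕ)
    (I : Ideal (MvPolynomial (Fin n × ℕ) k))
    (hne : I ≠ ⊥)
    (hhom : ∀ f ∈ I, ∀ m : ℕ,
      MvPolynomial.weightedHomogeneousComponent (fun p : Fin n × ℕ => p.2) m f ∈ I)
    (hzero : ∀ f ∈ I, f ∈ Algebra.adjoin k
      (Set.range fun i : Fin n => (MvPolynomial.X (i, 0) : MvPolynomial (Fin n × ℕ) k)) →
      f = 0) :
    ∀ Dbar : Derivation k (MvPolynomial (Fin n × ℕ) k ⧸ I)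
        (MvPolynomial (Fin n × ℕ) k ⧸ I),
      (∀ a : MvPolynomial (Fin n × ℕ) k,
          Dbar (Ideal.Quotient.mk I a) = Ideal.Quotient.mk I (arcDerivation k n a)) →
      LinearMap.ker Dbar.liftKaehlerDifferential
        ≠ Submodule.span (MvPolynomial (Fin n × ℕ) k ⧸ I)
            {ω | ∃ c c' : MvPolynomial (Fin n × ℕ) k ⧸ I,
              ω = Dbar c • KaehlerDifferential.D k (MvPolynomial (Fin n × ℕ) k ⧸ I) c'
                - Dbar c' • KaehlerDifferential.D k (MvPolynomial (Fin n × ℕ) k ⧸ I) c} := by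
  intro Dbar hDbar hW
  obtain ⟨m, f, hfI, hf0, hfm, hIm⟩ :=
    exists_isWeightedHomogeneous_le_weightedFiltration hne hhom
  have hm : m ≠ 0 := by
    rintro rfl
    exact hf0 (hzero f hfI hfm.mem_adjoin_X_zero)
  have hmf : C (m : k) * f ≠ 0 := mul_ne_zero (C_ne_zero.mpr (Nat.cast_ne_zero.mpr hm)) hf0
  set D' := truncatedArcDerivation I m hIm
  have hker : shiftedDifferential I f ∈ LinearMap.ker Dbar.liftKaehlerDifferential := by
    have := map_liftKaehlerDifferential_shiftedDifferential I Dbar LinearMap.id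
      (Algebra.linearMap _ _) (fun q => by simp [hDbar, arcDerivation_X]) f
    simpa [hfm.weightedEulerDerivation_eq, Ideal.Quotient.eq_zero_iff_mem.mpr hfI] using this
  have hψ : D'.liftKaehlerDifferential (shiftedDifferential I f) ≠ 0 := by
    intro h0
    have := map_liftKaehlerDifferential_shiftedDifferential I D' (Submodule.subtype _)
      (Algebra.linearMap _ _)
      (fun q => by simp [D', coe_truncatedArcDerivation_mk, arcDerivation_X]) f
    rw [h0, map_zero, hfm.weightedEulerDerivation_eq, Algebra.linearMap_apply, eq_comm,
      Ideal.Quotient.algebraMap_eq, Ideal.Quotient.eq_zero_iff_mem, nsmul_eq_mul,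
      ← map_natCast C] at this
    exact hmf ((hfm.C_mul _).eq_zero_of_mem_weightedFiltration this)
  exact hψ (Derivation.span_le_ker_liftKaehlerDifferential Dbar D'
    (smul_truncatedArcDerivation_comm I m hIm hDbar) (hW ▸ hker))

/-- Theorem `thm:ssjets`, implication (⇒) (contrapositive form): grade
`A = k[x_{i,j}]` by assigning weight `j` to `x_{i,j}`.  Let `I` be a nonzero `∂`-stable
ideal, homogeneous with respect to this weight grading, containing no nonzero polynomial
in the weight-zero variables `x_{1,0}, …, x_{n,0}` alone (i.e. `B = A/I` is a proper
quotient of the arc algebra of its degree-zero part).  Then for the induced derivation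
`∂̄` on `B = A/I`, the kernel of the contraction `ι : Ω_{B/k} → B` is strictly larger
than the submodule `W` generated by the elements `(∂̄c)·dc′ − (∂̄c′)·dc`; i.e. the
degree `−1` Koszul homology does not vanish. -/
theorem arc_koszul_minus_one_nonvanishing (k : Type*) [Field k] [CharZero k]
    (n : ℕ) (hn : 1 ≤ n)
    (I : Ideal (MvPolynomial (Fin n × ℕ) k))
    (hne : I ≠ ⊥)
    (hstable : ∀ a ∈ I, arcDerivation k n a ∈ I)
    (hhom : ∀ f ∈ I, ∀ m : ℕ,
      MvPolynomial.weightedHomogeneousComponent (fun p : Fin n × ℕ => p.2) m f ∈ I)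
    (hzero : ∀ f ∈ I, f ∈ Algebra.adjoin k
      (Set.range fun i : Fin n => (MvPolynomial.X (i, 0) : MvPolynomial (Fin n × ℕ) k)) →
      f = 0) :
    ∀ Dbar : Derivation k (MvPolynomial (Fin n × ℕ) k ⧸ I)
        (MvPolynomial (Fin n × ℕ) k ⧸ I),
      (∀ a : MvPolynomial (Fin n × ℕ) k,
          Dbar (Ideal.Quotient.mk I a) = Ideal.Quotient.mk I (arcDerivation k n a)) →
      LinearMap.ker Dbar.liftKaehlerDifferential
        ≠ Submodule.span (MvPolynomial (Fin n × ℕ) k ⧸ I)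
            {ω | ∃ c c' : MvPolynomial (Fin n × ℕ) k ⧸ I,
              ω = Dbar c • KaehlerDifferential.D k (MvPolynomial (Fin n × ℕ) k ⧸ I) c'
                - Dbar c' • KaehlerDifferential.D k (MvPolynomial (Fin n × ℕ) k ⧸ I) c} :=
  arc_koszul_minus_one_nonvanishing_general k n I hne hhom hzero
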